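/- arXiv:1207.2225 — 2 statements merged into one kernel-verified Lean document; each statement's English description precedes it below -/
import Mathlib

section
/- Let c ≥ 2 be an integer, and let A and B be modules over ℤ[1/c] (the localization of ℤ away from c; equivalently, abelian groups on which multiplication by c is bijective). Let k be a natural number, let α : A → A be the map α(x) = c^k • x, and let β : B → B be an additive endomorphism that is locally nilpotent, i.e., for every x ∈ B there exists l ∈ ℕ with β^l(x) = 0. Then every additive homomorphism g : B → A satisfying g ∘ β = α ∘ g is the zero homomorphism. -/
/-! Iterating `g ∘ β = α ∘ g` gives `α^l (g x) = g (β^l x)`, which vanishes once `l` kills `x`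
under `β`; since `α = c^k • ·` is injective on a `ℤ[1/c]`-module, so is `α^l`, whence `g x = 0`. -/

theorem AddMonoidHom.eq_zero_of_semiconj_of_injective {A B : Type*} [AddZeroClass A]
    [AddZeroClass B] (g : B →+ A) {α : A →+ A} (hα : Function.Injective α) {β : B → B}
    (hβ : ∀ x : B, ∃ l : ℕ, β^[l] x = 0) (hg : Function.Semiconj g β α) : g = 0 := by
  ext x
  obtain ⟨l, hl⟩ := hβ x
  have : (⇑α)^[l] (g x) = (⇑α)^[l] 0 := by
    rw [← hg.iterate_right l x, hl, map_zero, iterate_map_zero]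
  exact hα.iterate l this

theorem zsmul_injective_of_isUnit_intCast {R M : Type*} [Ring R] [AddCommGroup M] [Module R M]
    {n : ℤ} (hn : IsUnit (n : R)) : Function.Injective (n • · : M → M) := by
  intro x y h
  simp only [← Int.cast_smul_eq_zsmul R] at h
  exact hn.smul_left_cancel.mp h

theorem Localization.Away.zsmul_pow_injective (c : ℤ) (M : Type*) [AddCommGroup M]
    [Module (Localization.Away c) M] (k : ℕ) : Function.Injective (c ^ k • · : M → M) := by
  refine zsmul_injective_of_isUnit_intCast (R := Localization.Away c) ?_
  rw [Int.cast_pow, ← eq_intCast (algebraMap ℤ (Localization.Away c))]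
  exact (IsLocalization.Away.algebraMap_isUnit c).pow k

theorem stmt_1_general (c : ℤ) (A B : Type*) [AddCommGroup A] [AddCommGroup B]
    [Module (Localization.Away c) A]
    (k : ℕ) (α : A →+ A) (hα : ∀ x : A, α x = c ^ k • x)
    (β : B →+ B) (hβ : ∀ x : B, ∃ l : ℕ, (⇑β)^[l] x = 0)
    (g : B →+ A) (hg : ∀ x : B, g (β x) = α (g x)) :
    g = 0 := by
  have hα_inj : Function.Injective α := by
    rw [show ⇑α = (c ^ k • · : A → A) from funext hα]
    exact Localization.Away.zsmul_pow_injective c A k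
  exact g.eq_zero_of_semiconj_of_injective hα_inj hβ hg

/-- If `A` and `B` are modules over `ℤ[1/c]` (`c ≥ 2`), `α : A → A` is
multiplication by `c^k`, and `β : B → B` is a locally nilpotent additive endomorphism,
then every additive homomorphism `g : B → A` with `g ∘ β = α ∘ g` is zero. -/
theorem stmt_1 (c : ℤ) (hc : 2 ≤ c) (A B : Type*) [AddCommGroup A] [AddCommGroup B]
    [Module (Localization.Away c) A] [Module (Localization.Away c) B]
    (k : ℕ) (α : A →+ A) (hα : ∀ x : A, α x = c ^ k • x)
    (β : B →+ B) (hβ : ∀ x : B, ∃ l : ℕ, (⇑β)^[l] x = 0)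
    (g : B →+ A) (hg : ∀ x : B, g (β x) = α (g x)) :
    g = 0 :=
  stmt_1_general c A B k α hα β hβ g hg
end

section
/- Let m ≥ 1 and a ≥ 0 be natural numbers, let G be an abelian group, and let z ∈ G be an element such that (c^a · (c^m − 1)) • z = 0 for every integer c ≥ 2. Then ((2^m − 1) · (3^m − 1)) • z = 0. -/
/-! Since `2^a` and `3^a` are coprime, a Bézout combination `u 2^a + v 3^a = 1` writes
`(2^m − 1)(3^m − 1)` as an integer combination of `2^a (2^m − 1)` and `3^a (3^m − 1)`,
both of which kill `z`. -/

theorem smul_mul_eq_zero_of_isCoprime {R M : Type*} [CommRing R] [AddCommGroup M] [Module R M]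
    {p q s t : R} (hpq : IsCoprime p q) {z : M} (hp : (p * s) • z = 0) (hq : (q * t) • z = 0) :
    (s * t) • z = 0 := by
  obtain ⟨u, v, huv⟩ := hpq
  calc (s * t) • z = (u * t) • (p * s) • z + (v * s) • (q * t) • z := by
        rw [smul_smul, smul_smul, ← add_smul, ← one_mul (s * t), ← huv]; ring_nf
    _ = 0 := by rw [hp, hq, smul_zero, smul_zero, add_zero]

theorem stmt_7_general (m a : ℕ) (G : Type*) [AddCommGroup G] (z : G)
    (h : ∀ c : ℤ, 2 ≤ c → (c ^ a * (c ^ m - 1)) • z = 0) :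
    (((2 : ℤ) ^ m - 1) * ((3 : ℤ) ^ m - 1)) • z = 0 :=
  have hcop : IsCoprime ((2 : ℤ) ^ a) ((3 : ℤ) ^ a) :=
    (Int.isCoprime_iff_gcd_eq_one.mpr rfl).pow
  smul_mul_eq_zero_of_isCoprime hcop (h 2 (by norm_num)) (h 3 (by norm_num))

/-- If `z` in an abelian group satisfies `(c^a (c^m − 1)) • z = 0` for every
integer `c ≥ 2` (with `m ≥ 1`), then `((2^m − 1)(3^m − 1)) • z = 0`. -/
theorem stmt_7 (m a : ℕ) (hm : 1 ≤ m) (G : Type*) [AddCommGroup G] (z : G)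
    (h : ∀ c : ℤ, 2 ≤ c → (c ^ a * (c ^ m - 1)) • z = 0) :
    (((2 : ℤ) ^ m - 1) * ((3 : ℤ) ^ m - 1)) • z = 0 :=
  stmt_7_general m a G z h
end
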